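/- For a symmetric positive semidefinite real N×N matrix K and α > 0, log det(I + α^{-1}K) ≤ Tr(K(K+αI)^{-1}) · (1 + log(α^{-1}‖K‖₂ + 1)), where ‖K‖₂ denotes the largest eigenvalue of K. -/

import Mathlib

/-!
Both sides are spectral: with `λᵢ` the eigenvalues of `K`, the left side is `∑ log (1 + λᵢ / α)`
and the trace is `∑ λᵢ / (λᵢ + α)`. The inequality then holds term by term: for `x = λᵢ / α`,
`log (1 + x) ≤ x / (x + 1) * (1 + log (1 + x))` is a rearrangement of `log (1 + x) ≤ x`, and
`log (1 + x) ≤ log (1 + λmax / α)`.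
-/

open Matrix
open scoped ComplexOrder

lemma Real.log_one_add_le_div_mul {x M : ℝ} (hx : 0 ≤ x) (hxM : x ≤ M) :
    Real.log (1 + x) ≤ x / (x + 1) * (1 + Real.log (M + 1)) := by
  have hlog : Real.log (1 + x) ≤ x := by
    linarith [Real.log_le_sub_one_of_pos (by linarith : (0 : ℝ) < 1 + x)]
  calc Real.log (1 + x) ≤ x / (x + 1) * (1 + Real.log (1 + x)) := by
        rw [div_mul_eq_mul_div, le_div_iff₀ (by linarith)]
        linarith
    _ ≤ x / (x + 1) * (1 + Real.log (M + 1)) := by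
        gcongr _ * (_ + ?_)
        apply Real.log_le_log <;> linarith

namespace Matrix

variable {n 𝕜 : Type*} [Fintype n] [DecidableEq n] [RCLike 𝕜] {A : Matrix n n 𝕜}

namespace IsHermitian

lemma det_cfc (hA : A.IsHermitian) (f : ℝ → ℝ) :
    (cfc f A).det = ∏ i, (f (hA.eigenvalues i) : 𝕜) := by
  rw [cfc_eq hA, IsHermitian.cfc, Unitary.conjStarAlgAut_apply, det_mul_comm, ← mul_assoc,
    Unitary.coe_star_mul_self, one_mul, det_diagonal]
  rfl

lemma trace_cfc (hA : A.IsHermitian) (f : ℝ → ℝ) :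
    (cfc f A).trace = ∑ i, (f (hA.eigenvalues i) : 𝕜) := by
  rw [cfc_eq hA, IsHermitian.cfc, Unitary.conjStarAlgAut_apply, trace_mul_cycle,
    Unitary.coe_star_mul_self, one_mul, trace_diagonal]
  rfl

lemma one_add_smul_eq_cfc (hA : A.IsHermitian) (c : ℝ) :
    1 + c • A = cfc (fun x => 1 + c * x) A := by
  rw [cfc_const_add 1 (c * ·) A (ha := hA.isSelfAdjoint), cfc_const_mul_id c A hA.isSelfAdjoint,
    map_one]

end IsHermitian

lemma PosSemidef.mul_inv_add_smul_one_eq_cfc (hA : A.PosSemidef) {α : ℝ} (hα : 0 < α) :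
    A * (A + α • 1)⁻¹ = cfc (fun x => x / (x + α)) A := by
  have hA' : IsSelfAdjoint A := hA.1
  have hne : ∀ x ∈ spectrum ℝ A, x + α ≠ 0 := by
    rw [hA.1.spectrum_real_eq_range_eigenvalues]
    rintro _ ⟨i, rfl⟩
    linarith [hA.eigenvalues_nonneg i]
  rw [cfc_map_div _ _ A hne, cfc_id' ℝ A, cfc_add_const α (fun x => x) A, cfc_id' ℝ A,
    Algebra.algebraMap_eq_smul_one, nonsing_inv_eq_ringInverse]

end Matrix

theorem logdet_le_effective_dim {N : ℕ} (hN : 0 < N) (K : Matrix (Fin N) (Fin N) ℝ)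
    (hK : K.PosSemidef) (α : ℝ) (hα : 0 < α)
    (lmax : ℝ)
    (hlmax : lmax = Finset.univ.sup'
      (by simpa [Finset.univ_nonempty_iff] using Fin.pos_iff_nonempty.mp hN)
      hK.1.eigenvalues) :
    Real.log ((1 + α⁻¹ • K).det) ≤
      (K * (K + α • (1 : Matrix (Fin N) (Fin N) ℝ))⁻¹).trace *
        (1 + Real.log (α⁻¹ * lmax + 1)) := by
  set ev := hK.1.eigenvalues
  have hnonneg : ∀ i, 0 ≤ ev i := hK.eigenvalues_nonneg
  rw [hK.1.one_add_smul_eq_cfc, hK.mul_inv_add_smul_one_eq_cfc hα, hK.1.det_cfc, hK.1.trace_cfc]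
  simp only [RCLike.ofReal_real_eq_id, id]
  rw [Real.log_prod fun i _ => by have := hnonneg i; positivity, Finset.sum_mul]
  refine Finset.sum_le_sum fun i _ => ?_
  have hle : ev i ≤ lmax := hlmax ▸ Finset.le_sup' _ (Finset.mem_univ i)
  have := hnonneg i
  calc Real.log (1 + α⁻¹ * ev i)
      ≤ α⁻¹ * ev i / (α⁻¹ * ev i + 1) * (1 + Real.log (α⁻¹ * lmax + 1)) :=
        Real.log_one_add_le_div_mul (by positivity) (by gcongr)
    _ = ev i / (ev i + α) * (1 + Real.log (α⁻¹ * lmax + 1)) := by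
        field_simp
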